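/- arXiv:1902.01100 — 2 statements merged into one kernel-verified Lean document; each statement's English description precedes it below -/
import Mathlib

section
/- Let I = 7, J = 4, G_1 = {1,3,6}, G_2 = {2,4,7}, G_3 = {3,4,5,6,7}, G_4 = {6,7}, and h_1(x) = h_2(x) = 2(x+11)⁺, h_3(x) = h_4(x) = (x+11)⁺, h_5(x) = x⁺, h_6(x) = h_7(x) = 2(x+10)⁺. Then for every t with 3 ≤ t ≤ 8, the ⪕-greatest element F(t) of A_t satisfies F_5(t) = (8 − t)/5. In particular F_5(3) = 1 > 0 = F_5(8), so the mapping F fails to be nondecreasing on [0,∞) even though all h_i are piecewise linear of the form ρ^i(x − x*_i)⁺. -/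
/-- The set of indices at which `a` attains its minimum. -/
noncomputable def argminSet {n : ℕ} (a : Fin n → ℝ) : Finset (Fin n) :=
  Finset.univ.filter (fun i => ∀ j, a i ≤ a j)

/-- The minimum entry of `a`. -/
noncomputable def minval {n : ℕ} (a : Fin n → ℝ) : ℝ := ⨅ i, a i

/-- The restriction of `a` to the indices in `S`, reindexed by `Fin S.card`
in increasing order. -/
noncomputable def restrictVec {n : ℕ} (S : Finset (Fin n)) (a : Fin n → ℝ) :
    Fin S.card → ℝ :=
  fun i => a (S.orderIsoOfFin rfl i).1

/-- The "min-sensitive" partial order `⪕` on `ℝⁿ` (Definition 1 of the paper):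
for `n = 1` it is the usual order; for `n ≥ 2`, `a ⪕ b` iff (i) `a = b`, or
(ii) `min a < min b`, or (iii) `min a = min b` and `Argmin b ⊊ Argmin a`, or
(iv) `min a = min b`, `Argmin a = Argmin b ⊊ {1,...,n}` and the restrictions
of `a` and `b` to the complement of the common argmin set are related. -/
noncomputable def msLE : (n : ℕ) → (Fin n → ℝ) → (Fin n → ℝ) → Prop
  | 0, _, _ => True
  | 1, a, b => a 0 ≤ b 0
  | n + 2, a, b =>
    a = b ∨
    minval a < minval b ∨
    (minval a = minval b ∧ argminSet b ⊂ argminSet a) ∨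
    (minval a = minval b ∧ argminSet a = argminSet b ∧ argminSet a ⊂ Finset.univ ∧
      msLE ((argminSet a)ᶜ).card (restrictVec (argminSet a)ᶜ a) (restrictVec (argminSet a)ᶜ b))
termination_by n => n
decreasing_by
  have hne : (argminSet a).Nonempty := by
    obtain ⟨i, -, hi⟩ := Finset.exists_min_image Finset.univ a ⟨0, Finset.mem_univ 0⟩
    refine ⟨i, ?_⟩
    unfold argminSet
    exact Finset.mem_filter.mpr ⟨Finset.mem_univ i, fun j => hi j (Finset.mem_univ j)⟩
  have h1 : 0 < (argminSet a).card := Finset.card_pos.mpr hne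
  have h2 : ((argminSet a)ᶜ).card = Fintype.card (Fin (n + 2)) - (argminSet a).card :=
    Finset.card_compl _
  simp only [Fintype.card_fin] at h2
  omega

/-- `x*_i`: the supremum of the zero set of a function. -/
noncomputable def xstar (f : ℝ → ℝ) : ℝ := sSup {x | f x = 0}

/-- The admissible set `A_t`. -/
def admissible (I J : ℕ) (h : Fin I → ℝ → ℝ) (G : Fin J → Finset (Fin I)) (t : ℝ) :
    Set (Fin I → ℝ) :=
  {a | (∀ i, a i ≤ t) ∧ ∀ j, (∑ i ∈ G j, h i (a i)) ≤ t}

/-- `F` is the `⪕`-greatest element of `A_t`. -/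
def IsGreatestMS (I J : ℕ) (h : Fin I → ℝ → ℝ) (G : Fin J → Finset (Fin I)) (t : ℝ)
    (F : Fin I → ℝ) : Prop :=
  F ∈ admissible I J h G t ∧ ∀ a ∈ admissible I J h G t, msLE I a F

/-- The resource sets of Example 4 of the paper (`G_1 = {1,3,6}`, `G_2 = {2,4,7}`,
`G_3 = {3,4,5,6,7}`, `G_4 = {6,7}`, with indices shifted down by one). -/
def G14 : Fin 4 → Finset (Fin 7)
  | 0 => {0, 2, 5}
  | 1 => {1, 3, 6}
  | 2 => {2, 3, 4, 5, 6}
  | 3 => {5, 6}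

/-- The functions `h_i` of Example 4 of the paper. -/
noncomputable def h14 : Fin 7 → ℝ → ℝ
  | 0 => fun x => 2 * max (x + 11) 0
  | 1 => fun x => 2 * max (x + 11) 0
  | 2 => fun x => max (x + 11) 0
  | 3 => fun x => max (x + 11) 0
  | 4 => fun x => max x 0
  | 5 => fun x => 2 * max (x + 10) 0
  | 6 => fun x => 2 * max (x + 10) 0
/- ### Auxiliary lemmas -/

lemma minval_le' (a : Fin 7 → ℝ) (i : Fin 7) : minval a ≤ a i :=
  ciInf_le (Set.Finite.bddBelow (Set.finite_range a)) i

lemma le_minval' (a : Fin 7 → ℝ) (m : ℝ) (h : ∀ i, m ≤ a i) : m ≤ minval a :=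
  le_ciInf h

lemma sum0' (a : Fin 7 → ℝ) : ∑ i ∈ G14 0, h14 i (a i)
    = 2*max (a 0+11) 0 + max (a 2+11) 0 + 2*max (a 5+10) 0 := by
  show ∑ i ∈ ({0,2,5} : Finset (Fin 7)), h14 i (a i) = _
  rw [Finset.sum_insert (by decide), Finset.sum_insert (by decide), Finset.sum_singleton]
  simp [h14]; ring

lemma sum1' (a : Fin 7 → ℝ) : ∑ i ∈ G14 1, h14 i (a i)
    = 2*max (a 1+11) 0 + max (a 3+11) 0 + 2*max (a 6+10) 0 := by
  show ∑ i ∈ ({1,3,6} : Finset (Fin 7)), h14 i (a i) = _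
  rw [Finset.sum_insert (by decide), Finset.sum_insert (by decide), Finset.sum_singleton]
  simp [h14]; ring

lemma sum2' (a : Fin 7 → ℝ) : ∑ i ∈ G14 2, h14 i (a i)
    = max (a 2+11) 0 + max (a 3+11) 0 + max (a 4) 0 + 2*max (a 5+10) 0 + 2*max (a 6+10) 0 := by
  show ∑ i ∈ ({2,3,4,5,6} : Finset (Fin 7)), h14 i (a i) = _
  rw [Finset.sum_insert (by decide), Finset.sum_insert (by decide), Finset.sum_insert (by decide),
    Finset.sum_insert (by decide), Finset.sum_singleton]
  simp [h14]; ring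

lemma sum3' (a : Fin 7 → ℝ) : ∑ i ∈ G14 3, h14 i (a i)
    = 2*max (a 5+10) 0 + 2*max (a 6+10) 0 := by
  show ∑ i ∈ ({5,6} : Finset (Fin 7)), h14 i (a i) = _
  rw [Finset.sum_insert (by decide), Finset.sum_singleton]
  simp [h14]

/-- If the `G 0` constraint holds and `a 0, a 2, a 5` are all `≥ (t-53)/5`, they are
all equal to `(t-53)/5`. -/
lemma g0_block {t : ℝ} (a : Fin 7 → ℝ)
    (hs : 2*max (a 0+11) 0 + max (a 2+11) 0 + 2*max (a 5+10) 0 ≤ t)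
    (l0 : (t-53)/5 ≤ a 0) (l2 : (t-53)/5 ≤ a 2) (l5 : (t-53)/5 ≤ a 5) :
    a 0 = (t-53)/5 ∧ a 2 = (t-53)/5 ∧ a 5 = (t-53)/5 := by
  have m0 := le_max_left (a 0 + 11) 0
  have m2 := le_max_left (a 2 + 11) 0
  have m5 := le_max_left (a 5 + 10) 0
  refine ⟨by linarith, by linarith, by linarith⟩

lemma g1_block {t : ℝ} (a : Fin 7 → ℝ)
    (hs : 2*max (a 1+11) 0 + max (a 3+11) 0 + 2*max (a 6+10) 0 ≤ t)
    (l1 : (t-53)/5 ≤ a 1) (l3 : (t-53)/5 ≤ a 3) (l6 : (t-53)/5 ≤ a 6) :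
    a 1 = (t-53)/5 ∧ a 3 = (t-53)/5 ∧ a 6 = (t-53)/5 := by
  have m1 := le_max_left (a 1 + 11) 0
  have m3 := le_max_left (a 3 + 11) 0
  have m6 := le_max_left (a 6 + 10) 0
  refine ⟨by linarith, by linarith, by linarith⟩

/-- The candidate greatest element for `3 ≤ t ≤ 8`. -/
noncomputable def cand (t : ℝ) : Fin 7 → ℝ := fun i => if i = 4 then (8-t)/5 else (t-53)/5

lemma cand_lb {t : ℝ} (h3 : 3 ≤ t) (h8 : t ≤ 8) (j : Fin 7) : (t-53)/5 ≤ cand t j := by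
  unfold cand; split
  · linarith
  · exact le_refl _

lemma cand_4 (t : ℝ) : cand t 4 = (8-t)/5 := by unfold cand; rw [if_pos rfl]

lemma cand_ne {t : ℝ} {i : Fin 7} (hi : i ≠ 4) : cand t i = (t-53)/5 := by
  unfold cand; rw [if_neg hi]

lemma minval_cand {t : ℝ} (h3 : 3 ≤ t) (h8 : t ≤ 8) : minval (cand t) = (t-53)/5 := by
  refine le_antisymm ?_ (le_minval' _ _ (cand_lb h3 h8))
  have := minval_le' (cand t) 0
  rwa [cand_ne (by decide)] at this

lemma argmin_cand {t : ℝ} (h3 : 3 ≤ t) (h8 : t ≤ 8) :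
    argminSet (cand t) = ({0,1,2,3,5,6} : Finset (Fin 7)) := by
  have h4 : (4 : Fin 7) ∉ argminSet (cand t) := by
    simp only [argminSet, Finset.mem_filter]
    rintro ⟨-, h⟩
    have h0 := h 0
    rw [cand_4, cand_ne (by decide)] at h0
    linarith
  have hne : ∀ i : Fin 7, i ≠ 4 → i ∈ argminSet (cand t) := by
    intro i hi
    simp only [argminSet, Finset.mem_filter]
    refine ⟨Finset.mem_univ i, fun j => ?_⟩
    rw [cand_ne hi]; exact cand_lb h3 h8 j
  rw [show ({0,1,2,3,5,6} : Finset (Fin 7)) = ({4} : Finset (Fin 7))ᶜ from by decide]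
  ext i
  rw [Finset.mem_compl, Finset.mem_singleton]
  constructor
  · intro hmem hi4; rw [hi4] at hmem; exact h4 hmem
  · exact hne i

lemma cand_mem {t : ℝ} (h3 : 3 ≤ t) (h8 : t ≤ 8) :
    cand t ∈ admissible 7 4 h14 G14 t := by
  have hm11 : max ((t-53)/5 + 11) 0 = (t-53)/5 + 11 := max_eq_left (by linarith)
  have hm10 : max ((t-53)/5 + 10) 0 = (t-53)/5 + 10 := max_eq_left (by linarith)
  have hq : max ((8-t)/5) 0 = (8-t)/5 := max_eq_left (by linarith)
  constructor
  · intro i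
    unfold cand; split <;> linarith
  · intro j
    fin_cases j
    · show ∑ i ∈ G14 0, h14 i (cand t i) ≤ t
      rw [sum0', cand_ne (by decide), cand_ne (by decide), cand_ne (by decide), hm11, hm10]
      linarith
    · show ∑ i ∈ G14 1, h14 i (cand t i) ≤ t
      rw [sum1', cand_ne (by decide), cand_ne (by decide), cand_ne (by decide), hm11, hm10]
      linarith
    · show ∑ i ∈ G14 2, h14 i (cand t i) ≤ t
      rw [sum2', cand_ne (by decide), cand_ne (by decide), cand_4, cand_ne (by decide),
        cand_ne (by decide), hm11, hm10, hq]
      linarith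
    · show ∑ i ∈ G14 3, h14 i (cand t i) ≤ t
      rw [sum3', cand_ne (by decide), cand_ne (by decide), hm10]
      linarith

lemma single_le (a b : Fin 7 → ℝ)
    (h : msLE (({4} : Finset (Fin 7)).card) (restrictVec {4} a) (restrictVec {4} b)) :
    a 4 ≤ b 4 := by
  have key : ∀ (c : Fin 7 → ℝ), restrictVec ({4} : Finset (Fin 7)) c = fun _ => c 4 := by
    intro c; funext i
    unfold restrictVec
    have h2 := (({4} : Finset (Fin 7)).orderIsoOfFin rfl i).2
    rw [Finset.mem_singleton] at h2
    rw [h2]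
  rw [key a, key b] at h
  have h2 : msLE 1 (fun _ : Fin 1 => a 4) (fun _ : Fin 1 => b 4) := h
  unfold msLE at h2
  exact h2
/-- Example 4 of the paper: for `3 ≤ t ≤ 8` the `⪕`-greatest element
`F(t)` of `A_t` has fifth coordinate `F_5(t) = (8 - t)/5`; in particular, the
mapping `F` fails to be nondecreasing. -/
theorem F_not_monotone_example
    (F : ℝ → Fin 7 → ℝ)
    (hF : ∀ t : ℝ, 0 ≤ t → IsGreatestMS 7 4 h14 G14 t (F t)) :
    (∀ t : ℝ, 3 ≤ t → t ≤ 8 → F t 4 = (8 - t) / 5) ∧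
    ¬ (∀ s t : ℝ, 0 ≤ s → s ≤ t → ∀ i, F s i ≤ F t i) := by
  have key : ∀ t : ℝ, 3 ≤ t → t ≤ 8 → F t 4 = (8 - t) / 5 := by
    intro t h3 h8
    obtain ⟨⟨hle, hsum⟩, hgr⟩ := hF t (by linarith)
    have s0 := hsum 0; rw [sum0'] at s0
    have s1 := hsum 1; rw [sum1'] at s1
    have s2 := hsum 2; rw [sum2'] at s2
    have hminF : minval (F t) ≤ (t-53)/5 := by
      by_contra hcon
      push_neg at hcon
      have hlb : ∀ i, (t-53)/5 ≤ F t i := fun i => hcon.le.trans (minval_le' _ i)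
      obtain ⟨e0, -, -⟩ := g0_block (F t) s0 (hlb 0) (hlb 2) (hlb 5)
      have hx := minval_le' (F t) 0
      rw [e0] at hx
      linarith
    have hms := hgr (cand t) (cand_mem h3 h8)
    unfold msLE at hms
    rcases hms with heq | hlt | ⟨hmeq, hss⟩ | ⟨hmeq, haeq, -, hrec⟩
    · rw [← heq, cand_4]
    · rw [minval_cand h3 h8] at hlt; linarith
    · -- case (iii): impossible
      exfalso
      rw [minval_cand h3 h8] at hmeq
      rw [argmin_cand h3 h8] at hss
      obtain ⟨i, hiA, hinot⟩ := Finset.exists_of_ssubset hss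
      have hlb : ∀ j, (t-53)/5 ≤ F t j := fun j => hmeq.le.trans (minval_le' _ j)
      have hineq : F t i ≠ (t-53)/5 := by
        intro he
        apply hinot
        simp only [argminSet, Finset.mem_filter]
        exact ⟨Finset.mem_univ i, fun j => he ▸ hlb j⟩
      obtain ⟨e0, e2, e5⟩ := g0_block (F t) s0 (hlb 0) (hlb 2) (hlb 5)
      obtain ⟨e1, e3, e6⟩ := g1_block (F t) s1 (hlb 1) (hlb 3) (hlb 6)
      fin_cases hiA
      · exact hineq e0
      · exact hineq e1
      · exact hineq e2
      · exact hineq e3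
      · exact hineq e5
      · exact hineq e6
    · -- case (iv)
      rw [minval_cand h3 h8] at hmeq
      rw [argmin_cand h3 h8] at haeq hrec
      have hmF : minval (F t) = (t-53)/5 := hmeq.symm
      have hval : ∀ i : Fin 7, i ∈ argminSet (F t) → F t i = (t-53)/5 := by
        intro i hi
        simp only [argminSet, Finset.mem_filter] at hi
        have hA := le_minval' (F t) (F t i) hi.2
        have hB := minval_le' (F t) i
        linarith [hmF.le, hmF.ge]
      have e2 : F t 2 = (t-53)/5 := hval 2 (by rw [← haeq]; decide)
      have e3 : F t 3 = (t-53)/5 := hval 3 (by rw [← haeq]; decide)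
      have e5 : F t 5 = (t-53)/5 := hval 5 (by rw [← haeq]; decide)
      have e6 : F t 6 = (t-53)/5 := hval 6 (by rw [← haeq]; decide)
      rw [show ({0,1,2,3,5,6} : Finset (Fin 7))ᶜ = ({4} : Finset (Fin 7)) from by decide] at hrec
      have hge := single_le (cand t) (F t) hrec
      rw [cand_4] at hge
      have hm11 : max ((t-53)/5 + 11) 0 = (t-53)/5 + 11 := max_eq_left (by linarith)
      have hm10 : max ((t-53)/5 + 10) 0 = (t-53)/5 + 10 := max_eq_left (by linarith)
      rw [e2, e3, e5, e6, hm11, hm10] at s2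
      have hub := le_max_left (F t 4) 0
      linarith
  refine ⟨key, fun hmono => ?_⟩
  have h3 := key 3 (by norm_num) (by norm_num)
  have h8 := key 8 (by norm_num) (by norm_num)
  have := hmono 3 8 (by norm_num) (by norm_num) 4
  rw [h3, h8] at this
  norm_num at this
end

section
/- Assume that for every i ∈ 𝐈 the function h_i is strictly increasing on [x*_i, ∞). Then for every t ≥ 0 the ⪕-greatest element F(t) of A_t satisfies min_{i∈𝐈} F_i(t) = sup{x ≤ t : Σ_{i∈G_j} h_i(x) ≤ t for all j ∈ 𝐉}. -/

lemma msLE_minval_le : ∀ (n : ℕ) (a b : Fin n → ℝ), msLE n a b → minval a ≤ minval b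
  | 0, a, b, _ => by simp [minval, Real.iInf_of_isEmpty]
  | 1, a, b, hab => by
      unfold msLE at hab
      have ha : minval a = a 0 := ciInf_unique
      have hb : minval b = b 0 := ciInf_unique
      rw [ha, hb]; exact hab
  | n + 2, a, b, hab => by
      unfold msLE at hab
      rcases hab with rfl | hlt | ⟨heq, -⟩ | ⟨heq, -⟩
      · exact le_refl _
      · exact hlt.le
      · exact heq.le
      · exact heq.le

/-- if each `h_i` is strictly increasing on `[x*_i, ∞)`, then for each
`t ≥ 0` the minimum entry of the `⪕`-greatest element `F(t)` of `A_t` equals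
`f⁽¹⁾(t) = sup{x ≤ t : Σ_{i ∈ G_j} h_i(x) ≤ t for all j}`. -/
theorem min_F_eq_fOne
    (I J : ℕ) (hI : 0 < I) (hJ : 0 < J)
    (h : Fin I → ℝ → ℝ)
    (hcont : ∀ i, Continuous (h i))
    (hnonneg : ∀ i x, 0 ≤ h i x)
    (hmono : ∀ i, Monotone (h i))
    (htop : ∀ i, Filter.Tendsto (h i) Filter.atTop Filter.atTop)
    (hzero : ∀ i, ∃ x, h i x = 0)
    (hxle : ∀ i, xstar (h i) ≤ 0)
    (G : Fin J → Finset (Fin I))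
    (hGinj : Function.Injective G)
    (hGne : ∀ j, (G j).Nonempty)
    (hGcover : ∀ i, ∃ j, i ∈ G j)
    (hstrict : ∀ i, StrictMonoOn (h i) (Set.Ici (xstar (h i))))
    (t : ℝ) (ht : 0 ≤ t)
    (F : Fin I → ℝ)
    (hF : IsGreatestMS I J h G t F) :
    minval F = sSup {x | x ≤ t ∧ ∀ j, (∑ i ∈ G j, h i x) ≤ t} := by
  classical
  set S : Set ℝ := {x | x ≤ t ∧ ∀ j, (∑ i ∈ G j, h i x) ≤ t} with hS
  haveI : Nonempty (Fin I) := ⟨⟨0, hI⟩⟩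
  -- each h i vanishes at xstar (h i) and below
  have hvanish : ∀ i (x : ℝ), x ≤ xstar (h i) → h i x = 0 := by
    intro i x hx
    have hZne : {y | h i y = 0}.Nonempty := hzero i
    have hZbdd : BddAbove {y | h i y = 0} := by
      obtain ⟨N, hN⟩ := Filter.eventually_atTop.mp ((htop i).eventually_ge_atTop 1)
      refine ⟨N, fun y hy => ?_⟩
      by_contra hcon
      push_neg at hcon
      have := hN y hcon.le
      rw [Set.mem_setOf_eq.mp hy] at this
      linarith
    have hZcl : IsClosed {y | h i y = 0} := isClosed_eq (hcont i) continuous_const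
    have hmem : xstar (h i) ∈ {y | h i y = 0} := hZcl.csSup_mem hZne hZbdd
    have h1 : h i x ≤ h i (xstar (h i)) := hmono i hx
    have h2 : h i (xstar (h i)) = 0 := hmem
    have h3 := hnonneg i x
    linarith
  -- S is nonempty
  have hSne : S.Nonempty := by
    set x0 : ℝ := Finset.univ.inf' Finset.univ_nonempty (fun i => xstar (h i)) with hx0
    have hle : ∀ i, x0 ≤ xstar (h i) := fun i =>
      Finset.inf'_le _ (Finset.mem_univ i)
    refine ⟨x0, ?_, ?_⟩
    · calc x0 ≤ xstar (h ⟨0, hI⟩) := hle _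
        _ ≤ 0 := hxle _
        _ ≤ t := ht
    · intro j
      have : (∑ i ∈ G j, h i x0) = 0 :=
        Finset.sum_eq_zero fun i _ => hvanish i x0 (hle i)
      rw [this]; exact ht
  -- S is bounded above
  have hSbdd : BddAbove S := ⟨t, fun x hx => hx.1⟩
  -- S is closed
  have hScl : IsClosed S := by
    have : S = Set.Iic t ∩ ⋂ j, {x | (∑ i ∈ G j, h i x) ≤ t} := by
      ext x
      simp [hS, Set.mem_iInter, Set.mem_Iic]
    rw [this]
    exact isClosed_Iic.inter (isClosed_iInter fun j =>
      isClosed_le (continuous_finset_sum _ fun i _ => hcont i) continuous_const)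
  have hmS : sSup S ∈ S := hScl.csSup_mem hSne hSbdd
  -- minval F ∈ S
  have hFle : ∀ i, minval F ≤ F i := fun i =>
    ciInf_le (Set.Finite.bddBelow (Set.finite_range F)) i
  have hminS : minval F ∈ S := by
    constructor
    · exact le_trans (hFle ⟨0, hI⟩) (hF.1.1 ⟨0, hI⟩)
    · intro j
      calc (∑ i ∈ G j, h i (minval F)) ≤ ∑ i ∈ G j, h i (F i) :=
            Finset.sum_le_sum fun i _ => hmono i (hFle i)
        _ ≤ t := hF.1.2 j
  refine le_antisymm (le_csSup hSbdd hminS) ?_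
  -- constant vector at sSup S is admissible
  have hadm : (fun _ : Fin I => sSup S) ∈ admissible I J h G t :=
    ⟨fun _ => hmS.1, fun j => by simpa using hmS.2 j⟩
  have hms := hF.2 _ hadm
  have := msLE_minval_le I _ F hms
  rwa [show minval (fun _ : Fin I => sSup S) = sSup S from ciInf_const] at this
end
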